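/- arXiv:2111.10041 — 3 statements merged into one kernel-verified Lean document; each statement's English description precedes it below -/
import Mathlib

section
/- Scan lower bound via distorted pairs in the star-leaf gadget: let G be a weighted graph containing vertices a_i, a_j joined by an edge of weight w_{ij}, each attached to k leaves: leaves b_i^1, ..., b_i^k attached to a_i and b_j^1, ..., b_j^k attached to a_j, each via an edge of weight w_0 > 0. Assume dist(b_i^p, b_j^q) = w_{ij} + 2·w_0 for all p, q (the shortest path goes through the edge (a_i, a_j)), and suppose h is a sub-additive heuristic (h(x,z) ≤ h(x,y) + h(y,z)) with h(x,y) ≤ dist(x,y) applied to all leaf-to-vertex and vertex-to-vertex distances, satisfying h(a_i, a_j) ≤ w_{ij} − δ for some δ > 4·w_0. Then for every p, q, p' ∈ {1,...,k}: dist(b_i^p, b_i^{p'}) + h(b_i^{p'}, b_j^q) < dist(b_i^p, b_j^q). -/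
theorem le_add_add_of_triangle {V : Type*} {h : V → V → ℝ}
    (hsub : ∀ x y z : V, h x z ≤ h x y + h y z) (x y z w : V) :
    h x w ≤ h x y + h y z + h z w :=
  calc h x w ≤ h x z + h z w := hsub x z w
    _ ≤ h x y + h y z + h z w := add_le_add_left (hsub x y z) _

/-- Scan lower bound via distorted pairs in the star-leaf gadget: if the heuristic
underestimates `dist(a_i, a_j)` by `δ > 4·w₀`, then every leaf of `a_i` satisfies the strict
scan inequality with respect to any query from a leaf of `a_i` to a leaf of `a_j`. -/
theorem distorted_pair_scan_bound {V : Type*} (k : ℕ)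
    (dist h : V → V → ℝ) (ai aj : V) (bi bj : Fin k → V)
    (w0 wij δ : ℝ) (hw0 : 0 < w0) (hδ : 4 * w0 < δ)
    (hsub : ∀ x y z : V, h x z ≤ h x y + h y z)
    (hadm_leaf_i : ∀ p' : Fin k, h (bi p') ai ≤ w0)
    (hadm_leaf_j : ∀ q : Fin k, h aj (bj q) ≤ w0)
    (hdistorted : h ai aj ≤ wij - δ)
    (hdist_leaves : ∀ p q : Fin k, dist (bi p) (bj q) = wij + 2 * w0)
    (hdist_same : ∀ p p' : Fin k, dist (bi p) (bi p') ≤ 2 * w0) :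
    ∀ p q p' : Fin k,
      dist (bi p) (bi p') + h (bi p') (bj q) < dist (bi p) (bj q) := by
  intro p q p'
  have h_leaf_leaf : h (bi p') (bj q) ≤ w0 + (wij - δ) + w0 :=
    (le_add_add_of_triangle hsub (bi p') ai aj (bj q)).trans
      (add_le_add (add_le_add (hadm_leaf_i p') hdistorted) (hadm_leaf_j q))
  rw [hdist_leaves p q]
  calc dist (bi p) (bi p') + h (bi p') (bj q) ≤ 2 * w0 + (w0 + (wij - δ) + w0) :=
        add_le_add (hdist_same p p') h_leaf_leaf
    _ < wij + 2 * w0 := by linarith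
end

section
/- Monotone shortest paths in the weighted grid: consider the m × m grid graph with vertices v_{x,y} for 0 ≤ x, y ≤ m−1, unit-weight edges between horizontally and vertically adjacent cells where the cost of a path is the sum of vertex weights w_{x,y} of visited cells, with w_{x,y} = (n − x)·n⁴ + r_{x,y} where n ≥ 2m², and |r_{x,y}| ≤ n³ for all x, y. Then for any i, j, the minimum-cost path from v_{i,0} to v_{0,j} visits exactly the cells {v_{i,y} : 0 ≤ y ≤ j} ∪ {v_{x,j} : 0 ≤ x ≤ i} (first going up, then going right). -/
/-- Adjacency in the `m × m` grid: cells differ by one in exactly one coordinate,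
and both cells lie in the grid. -/
def GridAdj (m : ℕ) (a b : ℕ × ℕ) : Prop :=
  a.1 < m ∧ a.2 < m ∧ b.1 < m ∧ b.2 < m ∧
    ((a.1 = b.1 ∧ (a.2 + 1 = b.2 ∨ b.2 + 1 = a.2)) ∨
     (a.2 = b.2 ∧ (a.1 + 1 = b.1 ∨ b.1 + 1 = a.1)))

/-- `IsWalk E s t l` : `l` is a walk from `s` to `t` using edges of `E`. -/
def IsWalk {V : Type*} (E : V → V → Prop) (s t : V) : List V → Prop
  | [] => False
  | [a] => a = s ∧ a = t
  | a :: b :: rest => a = s ∧ E a b ∧ IsWalk E b t (b :: rest)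

/-- Cost of a walk in a vertex-weighted graph: the sum of the weights of all visited cells. -/
def vertexCost (w : ℕ × ℕ → ℝ) (l : List (ℕ × ℕ)) : ℝ := (l.map w).sum

namespace GridAux

def sumX (l : List (ℕ × ℕ)) : ℕ := (l.map Prod.fst).sum

@[simp] lemma sumX_nil : sumX [] = 0 := rfl
@[simp] lemma sumX_cons (p : ℕ × ℕ) (l : List (ℕ × ℕ)) : sumX (p :: l) = p.1 + sumX l := rfl

def T : ℕ → ℕ
  | 0 => 0
  | a + 1 => T a + a

lemma walk_head {V : Type*} {E : V → V → Prop} {s t : V} {l : List V}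
    (h : IsWalk E s t l) : ∃ r, l = s :: r := by
  cases l with
  | nil => exact h.elim
  | cons a r =>
    cases r with
    | nil => simp only [IsWalk] at h; exact ⟨[], by rw [h.1]⟩
    | cons b r' => simp only [IsWalk] at h; exact ⟨b :: r', by rw [h.1]⟩

lemma walk_grid (m : ℕ) : ∀ (l : List (ℕ × ℕ)) (s t : ℕ × ℕ),
    IsWalk (GridAdj m) s t l → s.1 < m → s.2 < m → ∀ p ∈ l, p.1 < m ∧ p.2 < m := by
  intro l
  induction l with
  | nil => intro s t h; exact h.elim
  | cons v rest ih =>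
    intro s t h hs1 hs2 p hp
    cases rest with
    | nil =>
      simp only [IsWalk] at h
      rcases List.mem_singleton.mp hp with rfl
      rw [h.1]; exact ⟨hs1, hs2⟩
    | cons v' rest' =>
      simp only [IsWalk] at h
      obtain ⟨rfl, hadj, hw⟩ := h
      rcases List.mem_cons.mp hp with rfl | hp'
      · exact ⟨hs1, hs2⟩
      · exact ih v' t hw hadj.2.2.1 hadj.2.2.2.1 p hp'

lemma walk_length_ge (m j : ℕ) : ∀ (l : List (ℕ × ℕ)) (a b : ℕ),
    IsWalk (GridAdj m) (a, b) (0, j) l → a + (j - b) + (b - j) + 1 ≤ l.length := by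
  intro l
  induction l with
  | nil => intro a b h; exact h.elim
  | cons v rest ih =>
    intro a b h
    cases rest with
    | nil =>
      simp only [IsWalk] at h
      have h1 : (a, b) = ((0 : ℕ), j) := h.1.symm.trans h.2
      have h2 : a = 0 ∧ b = j := by simpa [Prod.ext_iff] using h1
      simp only [List.length_cons, List.length_nil]
      omega
    | cons v' rest' =>
      simp only [IsWalk] at h
      obtain ⟨rfl, hadj, hw⟩ := h
      obtain ⟨c, d⟩ := v'
      have h2 := ih c d hw
      obtain ⟨-, -, -, -, hstep⟩ := hadj
      simp only [List.length_cons] at *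
      omega

lemma sumX_le_max (m j : ℕ) : ∀ (l : List (ℕ × ℕ)) (a b : ℕ),
    IsWalk (GridAdj m) (a, b) (0, j) l → b ≤ j → l.length = a + (j - b) + 1 →
    sumX l ≤ a * (j - b + 1) + T a := by
  intro l
  induction l with
  | nil => intro a b h; exact h.elim
  | cons v rest ih =>
    intro a b h hb hlen
    cases rest with
    | nil =>
      simp only [IsWalk] at h
      have h2 : a = 0 ∧ b = j := by simpa [Prod.ext_iff] using h.1.symm.trans h.2
      obtain ⟨rfl, rfl⟩ := h2
      obtain ⟨rfl, -⟩ := h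
      simp [T]
    | cons v' rest' =>
      simp only [IsWalk] at h
      obtain ⟨rfl, hadj, hwk⟩ := h
      obtain ⟨c, d⟩ := v'
      have hlen2 := walk_length_ge m j _ c d hwk
      simp only [List.length_cons] at hlen hlen2
      obtain ⟨-, -, -, -, hstep⟩ := hadj
      rcases hstep with ⟨h1, h2⟩ | ⟨h1, h2⟩
      · -- vertical step: a = c
        rcases h2 with h2 | h2
        · -- up step : d = b + 1; must have b < j
          have hbj : b < j := by omega
          have hih := ih c d hwk (by omega) (by simp only [List.length_cons]; omega)
          have hac : a = c := h1
          have hsum : sumX ((a, b) :: (c, d) :: rest') = a + sumX ((c,d) :: rest') := rfl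
          rw [hsum]
          have hrw : j - d + 1 = j - b := by omega
          rw [hrw] at hih
          have hmul : a * (j - b + 1) = a * (j - b) + a := by ring
          subst hac
          omega
        · -- down step: impossible
          omega
      · -- horizontal step
        rcases h2 with h2 | h2
        · -- right step: impossible
          omega
        · -- left step: c + 1 = a
          have hca : c + 1 = a := h2
          have hd : b = d := h1
          subst hd
          have hih := ih c b hwk (by omega) (by simp only [List.length_cons]; omega)
          have hrw : j - b + 1 = j - b + 1 := rfl
          have hTa : T a = T c + c := by rw [← hca]; rfl
          have hsum : sumX ((a, b) :: (c, b) :: rest') = a + sumX ((c,b) :: rest') := rfl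
          rw [hsum]
          have h3 : a * (j - b + 1) = c * (j - b + 1) + (j - b + 1) := by
            rw [← hca]; ring
          omega

lemma mem_char (m j : ℕ) : ∀ (l : List (ℕ × ℕ)) (a b : ℕ),
    IsWalk (GridAdj m) (a, b) (0, j) l → b ≤ j → l.length = a + (j - b) + 1 →
    a * (j - b + 1) + T a ≤ sumX l →
    ∀ p : ℕ × ℕ, p ∈ l ↔ ((p.1 = a ∧ b ≤ p.2 ∧ p.2 ≤ j) ∨ (p.1 ≤ a ∧ p.2 = j)) := by
  intro l
  induction l with
  | nil => intro a b h; exact h.elim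
  | cons v rest ih =>
    intro a b h hb hlen hsx p
    cases rest with
    | nil =>
      simp only [IsWalk] at h
      have h2 : a = 0 ∧ b = j := by simpa [Prod.ext_iff] using h.1.symm.trans h.2
      obtain ⟨rfl, rfl⟩ := h2
      obtain ⟨rfl, -⟩ := h
      obtain ⟨px, py⟩ := p
      simp only [List.mem_singleton, Prod.mk.injEq]
      omega
    | cons v' rest' =>
      simp only [IsWalk] at h
      obtain ⟨rfl, hadj, hwk⟩ := h
      obtain ⟨c, d⟩ := v'
      have hlen2 := walk_length_ge m j _ c d hwk
      simp only [List.length_cons] at hlen hlen2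
      obtain ⟨-, -, -, -, hstep⟩ := hadj
      rcases hstep with ⟨h1, h2⟩ | ⟨h1, h2⟩
      · rcases h2 with h2 | h2
        · -- up step : d = b + 1; must have b < j
          have hbj : b < j := by omega
          have hac : a = c := h1
          subst hac
          have hd : b + 1 = d := h2
          subst hd
          have hrw : j - (b + 1) + 1 = j - b := by omega
          have hmul : a * (j - b + 1) = a * (j - b) + a := by ring
          have hsx' : a * (j - (b + 1) + 1) + T a ≤ sumX ((a, b + 1) :: rest') := by
            have : sumX ((a, b) :: (a, b + 1) :: rest') = a + sumX ((a, b + 1) :: rest') := rfl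
            rw [this] at hsx
            rw [hrw]
            omega
          have hih := ih a (b + 1) hwk (by omega) (by simp only [List.length_cons]; omega) hsx' p
          obtain ⟨px, py⟩ := p
          simp only [List.mem_cons, Prod.mk.injEq] at hih ⊢
          rw [hih]
          omega
        · -- down step: impossible
          omega
      · rcases h2 with h2 | h2
        · -- right step: impossible
          omega
        · -- left step: c + 1 = a; must have b = j
          have hd : b = d := h1
          subst hd
          have hca : c + 1 = a := h2
          have hTa : T a = T c + c := by rw [← hca]; rfl
          have hsum : sumX ((a, b) :: (c, b) :: rest') = a + sumX ((c, b) :: rest') := rfl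
          -- from sumX upper bound on rest, b must equal j
          have hub := sumX_le_max m j _ c b hwk (by omega) (by simp only [List.length_cons]; omega)
          have hmul : a * (j - b + 1) = c * (j - b + 1) + (j - b + 1) := by rw [← hca]; ring
          have hbj : b = j := by
            by_contra hne
            have h4 : j - b ≥ 1 := by omega
            rw [hsum] at hsx
            omega
          subst hbj
          have hsx' : c * (b - b + 1) + T c ≤ sumX ((c, b) :: rest') := by
            rw [hsum] at hsx
            simp only [Nat.sub_self] at hsx ⊢
            omega
          have hih := ih c b hwk (by omega) (by simp only [List.length_cons]; omega) hsx' p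
          obtain ⟨px, py⟩ := p
          simp only [List.mem_cons, Prod.mk.injEq] at hih ⊢
          rw [hih]
          omega

lemma exists_canon (m j : ℕ) (hjm : j < m) : ∀ (k a b : ℕ), a + (j - b) = k → b ≤ j → a < m →
    ∃ l, IsWalk (GridAdj m) (a, b) (0, j) l ∧ l.length = a + (j - b) + 1 ∧
      sumX l = a * (j - b + 1) + T a := by
  intro k
  induction k with
  | zero =>
    intro a b hk hb ha
    have : a = 0 ∧ b = j := by omega
    obtain ⟨rfl, rfl⟩ := this
    exact ⟨[(0, b)], ⟨rfl, rfl⟩, by simp, by simp [T]⟩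
  | succ k ihk =>
    intro a b hk hb ha
    by_cases hbj : b < j
    · -- step up
      obtain ⟨l', hw', hlen', hsx'⟩ := ihk a (b + 1) (by omega) (by omega) ha
      obtain ⟨r, rfl⟩ := walk_head hw'
      refine ⟨(a, b) :: (a, b + 1) :: r, ⟨rfl, ?_, hw'⟩, ?_, ?_⟩
      · exact ⟨ha, by omega, ha, by omega, Or.inl ⟨rfl, Or.inl rfl⟩⟩
      · simp only [List.length_cons] at hlen' ⊢
        omega
      · have hmul : a * (j - b + 1) = a * (j - (b + 1) + 1) + a := by
          have : j - b + 1 = (j - (b + 1) + 1) + 1 := by omega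
          rw [this]; ring
        simp only [sumX_cons] at hsx' ⊢
        omega
    · -- b = j, step left; a = k + 1 > 0
      have hbj' : b = j := by omega
      subst hbj'
      obtain ⟨a', rfl⟩ : ∃ a', a = a' + 1 := ⟨a - 1, by omega⟩
      obtain ⟨l', hw', hlen', hsx'⟩ := ihk a' b (by omega) (by omega) (by omega)
      obtain ⟨r, rfl⟩ := walk_head hw'
      refine ⟨(a' + 1, b) :: (a', b) :: r, ⟨rfl, ?_, hw'⟩, ?_, ?_⟩
      · exact ⟨ha, hjm, by omega, hjm, Or.inr ⟨rfl, Or.inr rfl⟩⟩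
      · simp only [List.length_cons] at hlen' ⊢
        omega
      · have hT : T (a' + 1) = T a' + a' := rfl
        have hmul : (a' + 1) * (b - b + 1) = a' * (b - b + 1) + 1 := by simp
        simp only [sumX_cons] at hsx' ⊢
        omega

lemma cost_lb (m n : ℕ) (w : ℕ × ℕ → ℝ)
    (hw : ∀ x y : ℕ, x < m → y < m → |w (x, y) - ((n : ℝ) - x) * (n : ℝ) ^ 4| ≤ (n : ℝ) ^ 3) :
    ∀ l : List (ℕ × ℕ), (∀ p ∈ l, p.1 < m ∧ p.2 < m) →
      ((l.length : ℝ) * n - sumX l) * (n : ℝ) ^ 4 - l.length * (n : ℝ) ^ 3 ≤ vertexCost w l := by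
  intro l
  induction l with
  | nil => intro _; simp [vertexCost]
  | cons p l ihl =>
    intro hg
    obtain ⟨px, py⟩ := p
    have hp := hg (px, py) List.mem_cons_self
    have hb := hw px py hp.1 hp.2
    rw [abs_le] at hb
    have ihl' := ihl (fun q hq => hg q (List.mem_cons_of_mem _ hq))
    have hc : vertexCost w ((px, py) :: l) = w (px, py) + vertexCost w l := by
      simp [vertexCost]
    rw [hc]
    simp only [List.length_cons, sumX_cons]
    push_cast
    nlinarith [ihl', hb.1, hb.2]

lemma cost_ub (m n : ℕ) (w : ℕ × ℕ → ℝ)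
    (hw : ∀ x y : ℕ, x < m → y < m → |w (x, y) - ((n : ℝ) - x) * (n : ℝ) ^ 4| ≤ (n : ℝ) ^ 3) :
    ∀ l : List (ℕ × ℕ), (∀ p ∈ l, p.1 < m ∧ p.2 < m) →
      vertexCost w l ≤ ((l.length : ℝ) * n - sumX l) * (n : ℝ) ^ 4 + l.length * (n : ℝ) ^ 3 := by
  intro l
  induction l with
  | nil => intro _; simp [vertexCost]
  | cons p l ihl =>
    intro hg
    obtain ⟨px, py⟩ := p
    have hp := hg (px, py) List.mem_cons_self
    have hb := hw px py hp.1 hp.2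
    rw [abs_le] at hb
    have ihl' := ihl (fun q hq => hg q (List.mem_cons_of_mem _ hq))
    have hc : vertexCost w ((px, py) :: l) = w (px, py) + vertexCost w l := by
      simp [vertexCost]
    rw [hc]
    simp only [List.length_cons, sumX_cons]
    push_cast
    nlinarith [ihl', hb.1, hb.2]

lemma sumX_le_len (m : ℕ) : ∀ l : List (ℕ × ℕ), (∀ p ∈ l, p.1 < m) →
    sumX l ≤ l.length * (m - 1) := by
  intro l
  induction l with
  | nil => intro _; simp
  | cons p l ihl =>
    intro hg
    have hp := hg p List.mem_cons_self
    have := ihl (fun q hq => hg q (List.mem_cons_of_mem _ hq))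
    simp only [sumX_cons, List.length_cons]
    have : (l.length + 1) * (m - 1) = l.length * (m - 1) + (m - 1) := by ring
    omega

lemma arith1 (M N S L : ℝ) (hM : 1 ≤ M) (hN : 2 * M ^ 2 ≤ N) (hS1 : 1 ≤ S)
    (hS : S ≤ 2 * M - 1) (hL : S + 1 ≤ L)
    (hkey : (L * (N - M + 1)) * N ^ 4 - L * N ^ 3 ≤ S * N * N ^ 4 + S * N ^ 3) : False := by
  have hN2 : (2 : ℝ) ≤ N := by nlinarith [sq_nonneg (M - 1)]
  have hNM : M + 1 ≤ N := by nlinarith [sq_nonneg (M - 1)]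
  have hN3 : (0 : ℝ) < N ^ 3 := by positivity
  have hN4 : (0 : ℝ) ≤ N ^ 4 := by positivity
  have hC : 0 ≤ (N - M + 1) * N ^ 4 - N ^ 3 := by
    nlinarith [mul_nonneg (le_of_lt hN3) (by linarith : (0:ℝ) ≤ N - 1),
      mul_nonneg hN4 (by linarith : (0:ℝ) ≤ N - M)]
  nlinarith [mul_nonneg (by linarith : (0:ℝ) ≤ L - (S + 1)) hC,
    mul_nonneg (by linarith : (0:ℝ) ≤ 2 * M - 1 - S)
      (by nlinarith : (0:ℝ) ≤ (M - 1) * N ^ 4 + 2 * N ^ 3),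
    mul_nonneg (by linarith : (0:ℝ) ≤ N - 2 * M ^ 2) hN4,
    mul_nonneg (mul_nonneg (by linarith : (0:ℝ) ≤ 2 * M) (by linarith : (0:ℝ) ≤ N - 2))
      (le_of_lt hN3)]

lemma arith2 (N S D : ℝ) (hD : 1 ≤ D) (hS : 0 ≤ S) (hN : 0 < N)
    (hkey : D * N ^ 4 ≤ 2 * S * N ^ 3) : N ≤ 2 * S := by
  have hN3 : (0 : ℝ) < N ^ 3 := by positivity
  nlinarith [mul_nonneg (by linarith : (0:ℝ) ≤ D - 1) (by positivity : (0:ℝ) ≤ N ^ 4)]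

end GridAux

open GridAux

/-- Monotone shortest paths in the weighted grid: any minimum-cost path from `(i,0)` to `(0,j)`
visits exactly the cells of the up-then-right trajectory. -/
theorem grid_min_cost_path_up_then_right (m n : ℕ) (hm : 1 ≤ m) (hn : 2 * m ^ 2 ≤ n)
    (w : ℕ × ℕ → ℝ)
    (hw : ∀ x y : ℕ, x < m → y < m →
      |w (x, y) - ((n : ℝ) - x) * (n : ℝ) ^ 4| ≤ (n : ℝ) ^ 3)
    (i j : ℕ) (hi : i < m) (hj : j < m)
    (l : List (ℕ × ℕ))
    (hl : IsWalk (GridAdj m) (i, 0) (0, j) l)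
    (hmin : ∀ l', IsWalk (GridAdj m) (i, 0) (0, j) l' → vertexCost w l ≤ vertexCost w l') :
    l.toFinset =
      (Finset.range (j + 1)).image (fun y => (i, y)) ∪
      (Finset.range (i + 1)).image (fun x => (x, j)) := by
  obtain ⟨l0, hw0, hlen0, hsx0⟩ := exists_canon m j hj (i + j) i 0 (by omega) (by omega) hi
  have hj0 : j - 0 = j := by omega
  rw [hj0] at hlen0 hsx0
  have hg : ∀ p ∈ l, p.1 < m ∧ p.2 < m := walk_grid m l _ _ hl hi (by omega)
  have hg0 : ∀ p ∈ l0, p.1 < m ∧ p.2 < m := walk_grid m l0 _ _ hw0 hi (by omega)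
  have hlb := cost_lb m n w hw l hg
  have hub := cost_ub m n w hw l0 hg0
  have hcost : vertexCost w l ≤ vertexCost w l0 := hmin l0 hw0
  have hLge : i + j + 1 ≤ l.length := by
    have := walk_length_ge m j l i 0 hl
    omega
  have hXle : sumX l ≤ l.length * (m - 1) := sumX_le_len m l (fun p hp => (hg p hp).1)
  rw [hlen0, hsx0] at hub
  -- main real inequality
  have hkey : ((l.length : ℝ) * n - sumX l) * (n : ℝ) ^ 4 - l.length * (n : ℝ) ^ 3 ≤
      (((i + j + 1 : ℕ) : ℝ) * n - ((i * (j + 1) + T i : ℕ) : ℝ)) * (n : ℝ) ^ 4 +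
      ((i + j + 1 : ℕ) : ℝ) * (n : ℝ) ^ 3 := by
    calc ((l.length : ℝ) * n - sumX l) * (n : ℝ) ^ 4 - l.length * (n : ℝ) ^ 3 ≤
        vertexCost w l := hlb
      _ ≤ vertexCost w l0 := hcost
      _ ≤ _ := hub
  -- Claim 1 : the walk has minimal length
  have hLen : l.length = i + j + 1 := by
    by_contra hne
    have hL1 : i + j + 2 ≤ l.length := by omega
    have hMR : (1 : ℝ) ≤ (m : ℝ) := by exact_mod_cast hm
    have hNR : 2 * (m : ℝ) ^ 2 ≤ (n : ℝ) := by exact_mod_cast hn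
    have hSR : ((i + j + 1 : ℕ) : ℝ) ≤ 2 * (m : ℝ) - 1 := by
      push_cast; have : i + j ≤ 2 * m - 2 := by omega
      have h2 : ((i + j : ℕ) : ℝ) ≤ ((2 * m - 2 : ℕ) : ℝ) := by exact_mod_cast this
      push_cast [Nat.cast_sub (by omega : 2 ≤ 2 * m)] at h2
      linarith
    have hS1 : (1 : ℝ) ≤ ((i + j + 1 : ℕ) : ℝ) := by exact_mod_cast Nat.le_add_left 1 (i + j)
    have hLL : ((i + j + 1 : ℕ) : ℝ) + 1 ≤ (l.length : ℝ) := by exact_mod_cast hL1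
    have hXR : (sumX l : ℝ) ≤ (l.length : ℝ) * ((m : ℝ) - 1) := by
      have h2 : ((sumX l : ℕ) : ℝ) ≤ ((l.length * (m - 1) : ℕ) : ℝ) := by exact_mod_cast hXle
      push_cast [Nat.cast_sub hm] at h2
      linarith
    have hX0 : (0 : ℝ) ≤ ((i * (j + 1) + T i : ℕ) : ℝ) := by positivity
    refine arith1 (m : ℝ) (n : ℝ) ((i + j + 1 : ℕ) : ℝ) (l.length : ℝ) hMR hNR hS1 hSR hLL ?_
    have hA : ((l.length : ℝ) * ((n : ℝ) - m + 1)) * (n : ℝ) ^ 4 ≤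
        ((l.length : ℝ) * n - sumX l) * (n : ℝ) ^ 4 := by
      have : (l.length : ℝ) * ((n : ℝ) - m + 1) ≤ (l.length : ℝ) * n - sumX l := by
        nlinarith
      exact mul_le_mul_of_nonneg_right this (by positivity)
    have hB : (((i + j + 1 : ℕ) : ℝ) * n - ((i * (j + 1) + T i : ℕ) : ℝ)) * (n : ℝ) ^ 4 ≤
        (((i + j + 1 : ℕ) : ℝ) * n) * (n : ℝ) ^ 4 := by
      exact mul_le_mul_of_nonneg_right (by linarith) (by positivity)
    linarith
  -- Claim 2 : sumX l is at least the canonical value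
  have hXge : i * (j + 1) + T i ≤ sumX l := by
    by_contra hne
    have hx1 : sumX l + 1 ≤ i * (j + 1) + T i := by omega
    have hi1 : 1 ≤ i := by
      rcases Nat.eq_zero_or_pos i with rfl | h
      · simp [T] at hx1
      · exact h
    have hm2 : 2 ≤ m := by omega
    have hDR : (1 : ℝ) ≤ ((i * (j + 1) + T i : ℕ) : ℝ) - (sumX l : ℝ) := by
      have h9 : ((sumX l : ℕ) : ℝ) + 1 ≤ ((i * (j + 1) + T i : ℕ) : ℝ) := by exact_mod_cast hx1
      linarith
    have hNpos : (0 : ℝ) < (n : ℝ) := by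
      have : 0 < n := by nlinarith
      exact_mod_cast this
    have hkey2 : (((i * (j + 1) + T i : ℕ) : ℝ) - (sumX l : ℝ)) * (n : ℝ) ^ 4 ≤
        2 * ((i + j + 1 : ℕ) : ℝ) * (n : ℝ) ^ 3 := by
      rw [hLen] at hkey
      linarith [hkey]
    have := arith2 (n : ℝ) ((i + j + 1 : ℕ) : ℝ)
      (((i * (j + 1) + T i : ℕ) : ℝ) - (sumX l : ℝ)) hDR (by positivity) hNpos hkey2
    have hnat : n ≤ 2 * (i + j + 1) := by exact_mod_cast this
    have h4m : 4 * m ≤ 2 * m ^ 2 := by nlinarith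
    have h4n : 4 * m ≤ n := le_trans h4m hn
    omega
  -- conclude via the membership characterization
  have hchar := mem_char m j l i 0 hl (by omega) (by omega) (by
    have : i * (j - 0 + 1) = i * (j + 1) := by rw [hj0]
    rw [this]; exact hXge)
  ext p
  obtain ⟨px, py⟩ := p
  have hc := hchar (px, py)
  simp only [List.mem_toFinset, Finset.mem_union, Finset.mem_image, Finset.mem_range]
  rw [hc]
  constructor
  · rintro (⟨h1, h2, h3⟩ | ⟨h1, h2⟩)
    · exact Or.inl ⟨py, by omega, by simp only [Prod.mk.injEq]; exact ⟨h1.symm, trivial⟩⟩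
    · exact Or.inr ⟨px, by omega, by simp only [Prod.mk.injEq]; exact ⟨trivial, h2.symm⟩⟩
  · rintro (⟨y, hy, he⟩ | ⟨x, hx, he⟩)
    · obtain ⟨rfl, rfl⟩ : i = px ∧ y = py := by simpa [Prod.ext_iff] using he
      left; omega
    · obtain ⟨rfl, rfl⟩ : x = px ∧ j = py := by simpa [Prod.ext_iff] using he
      right; omega
end

section
/- Reconstruction of path sums on a grid: given any target values x ∈ {0, ..., 2^b − 1}^{m×m} with 2^b ≤ n², there exists an assignment δ : {0,...,m−1}² → ℤ with |δ_{i,j}| ≤ 2m·n² for all i, j, such that for every (i, j), the sum of δ along the up-then-right path from (i, 0) to (0, j) — namely Σ_{y=0}^{j} δ_{i,y} + Σ_{x=0}^{i−1} δ_{x,j} — equals x_{i,j}. -/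
/-!
`δ` is the cumulative mixed second difference of `x` along diagonals:
`δ (i+1) (j+1) - δ i j = x (i+1) (j+1) + x i j - x (i+1) j - x i (j+1)`, with first differences on
the boundary. Comparing the row sums of rows `i+1` and `i`, shifted by one column, the mixed
differences telescope to `x (i+1) j - x i j`, so the hook sums satisfy the same recursion in `i` as
`x`. Each mixed difference of values in `[0, N]` lies in `[-2N, 2N]`, and at most `min i j` of them
are accumulated on top of a boundary difference in `[-N, N]`.
-/

open Finset

section AddCommGroup

variable {G : Type*} [AddCommGroup G]

def hookDelta (x : ℕ → ℕ → G) : ℕ → ℕ → G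
  | 0, 0 => x 0 0
  | 0, j + 1 => x 0 (j + 1) - x 0 j
  | i + 1, 0 => x (i + 1) 0 - x i 0
  | i + 1, j + 1 => hookDelta x i j + ((x (i + 1) (j + 1) + x i j) - (x (i + 1) j + x i (j + 1)))

def hookSum (δ : ℕ → ℕ → G) (i j : ℕ) : G :=
  ∑ y ∈ range (j + 1), δ i y + ∑ i' ∈ range i, δ i' j

variable (x : ℕ → ℕ → G)

theorem sum_range_succ_hookDelta_zero (j : ℕ) :
    ∑ y ∈ range (j + 1), hookDelta x 0 y = x 0 j := by
  simp only [sum_range_succ', hookDelta, sum_range_sub (x 0)]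
  abel

theorem sum_range_succ_hookDelta_succ (i j : ℕ) :
    ∑ y ∈ range (j + 1), hookDelta x (i + 1) y
      = ∑ y ∈ range j, hookDelta x i y + (x (i + 1) j - x i j) := by
  set f : ℕ → G := fun y ↦ x (i + 1) y - x i y
  have hstep (y : ℕ) : hookDelta x (i + 1) (y + 1) = hookDelta x i y + (f (y + 1) - f y) := by
    simp only [hookDelta, f]
    abel
  rw [sum_range_succ', sum_congr rfl fun y _ ↦ hstep y, sum_add_distrib, sum_range_sub]
  simp only [hookDelta, f]
  abel

theorem hookSum_hookDelta (i j : ℕ) : hookSum (hookDelta x) i j = x i j := by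
  induction i with
  | zero => simp [hookSum, sum_range_succ_hookDelta_zero]
  | succ i ih =>
    rw [hookSum, sum_range_succ_hookDelta_succ, sum_range_succ (hookDelta x · j)]
    rw [hookSum, sum_range_succ] at ih
    rw [← ih]
    abel

end AddCommGroup

theorem abs_hookDelta_le {x : ℕ → ℕ → ℤ} {N : ℤ} {i j : ℕ}
    (hx : ∀ i' ≤ i, ∀ j' ≤ j, 0 ≤ x i' j' ∧ x i' j' ≤ N) :
    |hookDelta x i j| ≤ (2 * min i j + 1) * N := by
  fun_induction hookDelta x i j with
  | case1 => simpa [abs_of_nonneg (hx 0 le_rfl 0 le_rfl).1] using (hx 0 le_rfl 0 le_rfl).2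
  | case2 j =>
    simpa using abs_sub_le_of_nonneg_of_le (hx 0 le_rfl (j + 1) le_rfl).1
      (hx 0 le_rfl (j + 1) le_rfl).2 (hx 0 le_rfl j (by omega)).1 (hx 0 le_rfl j (by omega)).2
  | case3 i =>
    simpa using abs_sub_le_of_nonneg_of_le (hx (i + 1) le_rfl 0 le_rfl).1
      (hx (i + 1) le_rfl 0 le_rfl).2 (hx i (by omega) 0 le_rfl).1 (hx i (by omega) 0 le_rfl).2
  | case4 i j ih =>
    have hδ := ih fun i' hi' j' hj' ↦ hx i' (by omega) j' (by omega)
    have hmixed : |(x (i + 1) (j + 1) + x i j) - (x (i + 1) j + x i (j + 1))| ≤ 2 * N := by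
      obtain ⟨h₁, h₁'⟩ := hx (i + 1) le_rfl (j + 1) le_rfl
      obtain ⟨h₂, h₂'⟩ := hx i (by omega) j (by omega)
      obtain ⟨h₃, h₃'⟩ := hx (i + 1) le_rfl j (by omega)
      obtain ⟨h₄, h₄'⟩ := hx i (by omega) (j + 1) le_rfl
      rw [abs_le]
      constructor <;> linarith
    calc _ ≤ |hookDelta x i j| + |(x (i + 1) (j + 1) + x i j) - (x (i + 1) j + x i (j + 1))| :=
          abs_add_le _ _
      _ ≤ (2 * min i j + 1) * N + 2 * N := add_le_add hδ hmixed
      _ = (2 * min (i + 1) (j + 1) + 1) * N := by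
          rw [Nat.succ_min_succ]
          push_cast
          ring

theorem grid_path_sum_reconstruction_general (m b n : ℕ) (hbn : 2 ^ b ≤ n ^ 2)
    (x : ℕ → ℕ → ℕ) (hx : ∀ i j, i < m → j < m → x i j < 2 ^ b) :
    ∃ δ : ℕ → ℕ → ℤ,
      (∀ i j, i < m → j < m → |δ i j| ≤ 2 * (m : ℤ) * (n : ℤ) ^ 2) ∧
      (∀ i j, i < m → j < m →
        (∑ y ∈ Finset.range (j + 1), δ i y) + (∑ x' ∈ Finset.range i, δ x' j)
          = (x i j : ℤ)) := by
  refine ⟨hookDelta fun i j ↦ (x i j : ℤ), fun i j hi hj ↦ ?_,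
    fun i j _ _ ↦ hookSum_hookDelta _ i j⟩
  have hbound : |hookDelta (fun i j ↦ (x i j : ℤ)) i j| ≤ (2 * min i j + 1) * (n : ℤ) ^ 2 :=
    abs_hookDelta_le fun i' hi' j' hj' ↦
      ⟨by positivity, by exact_mod_cast ((hx i' j' (by omega) (by omega)).trans_le hbn).le⟩
  have hcoef : (2 * min i j + 1 : ℤ) ≤ 2 * m := by omega
  exact hbound.trans (mul_le_mul_of_nonneg_right hcoef (by positivity))

/-- Reconstruction of path sums on a grid: for any targets `x i j ∈ {0,…,2^b−1}` there is an
assignment `δ` with `|δ i j| ≤ 2·m·n²` whose sum along the up-then-right path from `(i,0)` to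
`(0,j)` equals `x i j`. -/
theorem grid_path_sum_reconstruction (m b n : ℕ) (hm : 1 ≤ m) (hbn : 2 ^ b ≤ n ^ 2)
    (x : ℕ → ℕ → ℕ) (hx : ∀ i j, i < m → j < m → x i j < 2 ^ b) :
    ∃ δ : ℕ → ℕ → ℤ,
      (∀ i j, i < m → j < m → |δ i j| ≤ 2 * (m : ℤ) * (n : ℤ) ^ 2) ∧
      (∀ i j, i < m → j < m →
        (∑ y ∈ Finset.range (j + 1), δ i y) + (∑ x' ∈ Finset.range i, δ x' j)
          = (x i j : ℤ)) :=
  grid_path_sum_reconstruction_general m b n hbn x hx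
end
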